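/- The system of 12 polynomial equations in μ ∈ (ℝ^4)^*: μ(h_{ε_1−ε_2})·(μ(h_{ε_1+ε_2})+5/2) = 0, μ(h_{ε_2−ε_3})·(μ(h_{ε_2+ε_3})+3/2) = 0, μ(h_{ε_3−ε_4})·(μ(h_{ε_3+ε_4})+1/2) = 0, μ(h_{ε_4})·(μ(h_{ε_4})−1) = 0, μ(h_{ε_3−ε_4})·(μ(h_{ε_1+ε_2})+5/2) = 0, μ(h_{ε_2−ε_3})·(μ(h_{ε_1+ε_4})+3/2) = 0, μ(h_{ε_3+ε_4})·(μ(h_{ε_1−ε_2})+1/2) = 0, μ(h_{(ε_1−ε_2−ε_3−ε_4)/2})·(μ(h_{(ε_1−ε_2−ε_3−ε_4)/2})−1) = 0, μ(h_{ε_3+ε_4})·(μ(h_{ε_1+ε_2})+5/2) = 0, μ(h_{ε_2−ε_3})·(μ(h_{ε_1−ε_4})+3/2) = 0, μ(h_{ε_3−ε_4})·(μ(h_{ε_1−ε_2})+1/2) = 0, μ(h_{(ε_1−ε_2−ε_3+ε_4)/2})·(μ(h_{(ε_1−ε_2−ε_3+ε_4)/2})−1) = 0, has exactly four solutions, namely μ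 = 0, μ = −(3/2)ω_1, μ = −(1/2)ω_1 − (1/2)ω_2, μ = −(3/2)ω_2 + ω_3 (in terms of the fundamental weights of F_4). -/

import Mathlib

/-!
Write `μ = (a, b, c, d)`. Up to constant factors each equation is a product of two affine forms
in `a, b, c, d`, and nine of them already determine `μ`. If `b ≠ c`, the equations with the
factor `b - c` give `a + d = a - d = b + c = -3/2`, after which `(c - d)(c + d + 1/2) = 0` leaves
`c ∈ {0, -1/2}`. If `b = c`, then either `c = d ∈ {0, 1/2}`, where `d = 0` forces `a = 0` by the
first and eighth equations and `d = 1/2` contradicts the equations with the factor `c + d`; or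
`c + d = -1/2`, and those equations give `a + b = -5/2`, `a - b = -1/2`. The four resulting
weights are checked directly.
-/

abbrev V4 : Type := Fin 4 → ℚ

def ip (x y : V4) : ℚ := ∑ i, x i * y i

/-- `μ(h_α) = 2(μ,α)/(α,α)`, the value of `μ` on the coroot `h_α`. -/
def mh (μ α : V4) : ℚ := 2 * ip μ α / ip α α

/-- The fundamental weights of `F₄`: `ω_1 = ε_1+ε_2`, `ω_2 = 2ε_1+ε_2+ε_3`,
`ω_3 = (3ε_1+ε_2+ε_3+ε_4)/2`, `ω_4 = ε_1`. -/
def omF : Fin 4 → V4 := ![![1,1,0,0], ![2,1,1,0], ![3/2,1/2,1/2,1/2], ![1,0,0,0]]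

-- Equations 1–4 and 6–10 of the system, with constant factors cleared.
theorem solutions_of_reduced_system (a b c d : ℚ)
    (h1 : (a - b) * (a + b + 5/2) = 0) (h2 : (b - c) * (b + c + 3/2) = 0)
    (h3 : (c - d) * (c + d + 1/2) = 0) (h4 : d * (2 * d - 1) = 0)
    (h6 : (b - c) * (a + d + 3/2) = 0) (h7 : (c + d) * (a - b + 1/2) = 0)
    (h8 : (a - b - c - d) * (a - b - c - d - 1) = 0) (h9 : (c + d) * (a + b + 5/2) = 0)
    (h10 : (b - c) * (a - d + 3/2) = 0) :
    (a = 0 ∧ b = 0 ∧ c = 0 ∧ d = 0) ∨ (a = -(3/2) ∧ b = -(3/2) ∧ c = 0 ∧ d = 0) ∨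
    (a = -(3/2) ∧ b = -1 ∧ c = -(1/2) ∧ d = 0) ∨ (a = -(3/2) ∧ b = -1 ∧ c = -1 ∧ d = 1/2) := by
  by_cases hbc : b = c
  · subst hbc
    rcases mul_eq_zero.mp h3 with hbd | hbd
    · obtain rfl : b = d := sub_eq_zero.mp hbd
      rcases mul_eq_zero.mp h4 with rfl | hb
      · have ha : a = 0 := by
          rcases mul_eq_zero.mp h1 with h | h <;> rcases mul_eq_zero.mp h8 with h' | h' <;> linarith
        exact Or.inl ⟨ha, rfl, rfl, rfl⟩
      · have hb0 : b + b ≠ 0 := by linarith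
        have := (mul_eq_zero.mp h7).resolve_left hb0
        have := (mul_eq_zero.mp h9).resolve_left hb0
        exfalso; linarith
    · have hbd0 : b + d ≠ 0 := by linarith
      have := (mul_eq_zero.mp h7).resolve_left hbd0
      have := (mul_eq_zero.mp h9).resolve_left hbd0
      right; right; right; refine ⟨?_, ?_, ?_, ?_⟩ <;> linarith
  · have hbc0 : b - c ≠ 0 := sub_ne_zero.mpr hbc
    have had := (mul_eq_zero.mp h6).resolve_left hbc0
    have hamd := (mul_eq_zero.mp h10).resolve_left hbc0
    have hb := (mul_eq_zero.mp h2).resolve_left hbc0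
    obtain ⟨ha, rfl⟩ : a = -(3/2) ∧ d = 0 := ⟨by linarith, by linarith⟩
    rcases mul_eq_zero.mp h3 with hc | hc
    · exact Or.inr <| Or.inl ⟨ha, by linarith, by linarith, rfl⟩
    · exact Or.inr <| Or.inr <| Or.inl ⟨ha, by linarith, by linarith, rfl⟩

theorem mh_vecCons (a b c d x y z w : ℚ) :
    mh ![a, b, c, d] ![x, y, z, w] =
      2 * (a * x + b * y + c * z + d * w) / (x * x + y * y + z * z + w * w) := by
  simp [mh, ip, Fin.sum_univ_four]

/-- The system of 12 polynomial equations in `μ` (coming from the polynomials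
`p_1, …, p_12 ∈ 𝒫₀^F`) has exactly four solutions: `0`, `−(3/2)ω_1`,
`−(1/2)ω_1 − (1/2)ω_2`, and `−(3/2)ω_2 + ω_3`. -/
theorem stmt10 (μ : V4) :
    (mh μ ![1,-1,0,0] * (mh μ ![1,1,0,0] + 5/2) = 0 ∧
     mh μ ![0,1,-1,0] * (mh μ ![0,1,1,0] + 3/2) = 0 ∧
     mh μ ![0,0,1,-1] * (mh μ ![0,0,1,1] + 1/2) = 0 ∧
     mh μ ![0,0,0,1] * (mh μ ![0,0,0,1] - 1) = 0 ∧
     mh μ ![0,0,1,-1] * (mh μ ![1,1,0,0] + 5/2) = 0 ∧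
     mh μ ![0,1,-1,0] * (mh μ ![1,0,0,1] + 3/2) = 0 ∧
     mh μ ![0,0,1,1] * (mh μ ![1,-1,0,0] + 1/2) = 0 ∧
     mh μ ![1/2,-1/2,-1/2,-1/2] * (mh μ ![1/2,-1/2,-1/2,-1/2] - 1) = 0 ∧
     mh μ ![0,0,1,1] * (mh μ ![1,1,0,0] + 5/2) = 0 ∧
     mh μ ![0,1,-1,0] * (mh μ ![1,0,0,-1] + 3/2) = 0 ∧
     mh μ ![0,0,1,-1] * (mh μ ![1,-1,0,0] + 1/2) = 0 ∧
     mh μ ![1/2,-1/2,-1/2,1/2] * (mh μ ![1/2,-1/2,-1/2,1/2] - 1) = 0) ↔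
    (μ = 0 ∨ μ = -(3/2 : ℚ) • omF 0 ∨
     μ = -(1/2 : ℚ) • omF 0 - (1/2 : ℚ) • omF 1 ∨
     μ = -(3/2 : ℚ) • omF 1 + omF 2) := by
  obtain ⟨a, b, c, d, rfl⟩ : ∃ a b c d : ℚ, μ = ![a, b, c, d] :=
    ⟨_, _, _, _, (FinVec.etaExpand_eq μ).symm⟩
  simp only [mh_vecCons, omF, Matrix.cons_val, ← Matrix.cons_zero_zero, Matrix.smul_cons,
    Matrix.cons_add_cons, Matrix.cons_sub_cons, Matrix.vecCons_inj, Matrix.empty_eq, and_true]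
  constructor
  · rintro ⟨h1, h2, h3, h4, -, h6, h7, h8, h9, h10, -, -⟩
    norm_num
    exact solutions_of_reduced_system a b c d
      (by linear_combination h1) (by linear_combination h2) (by linear_combination h3)
      (by linear_combination h4 / 2) (by linear_combination h6) (by linear_combination h7)
      (by linear_combination h8) (by linear_combination h9) (by linear_combination h10)
  · rintro (h | h | h | h) <;> obtain ⟨rfl, rfl, rfl, rfl⟩ := h <;> norm_num
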